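/- arXiv:2305.07319 — 8 statements merged into one kernel-verified Lean document; each statement's English description precedes it below -/
import Mathlib

section
/- Let R and S be strings over a linearly ordered alphabet, and let MS be the matching statistics of S with respect to R, with entries MS[i] = (p_i, ℓ_i). Call a position j a head if j = 1 or ℓ_j > ℓ_{j−1} − 1. Let j be a head and let j' be the smallest head greater than j (or j' = |S| + 1 if none exists). Then for every i with j ≤ i < j', one has ℓ_i = ℓ_j − (i − j), and the string S[i .. i + ℓ_i − 1] occurs in R starting at position p_j + (i − j); that is, (p_j + (i − j), ℓ_j − (i − j)) is a valid matching statistics entry for position i. -/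
/-- A position `j` (0-based) of `S` is a *head* of the matching statistics length
function `ℓ` if `j = 1` (1-based), i.e. `j = 0` here, or `ℓ j > ℓ (j-1) - 1`. -/
def IsMSHead (ℓ : ℕ → ℕ) (j : ℕ) : Prop :=
  j = 0 ∨ (ℓ (j - 1) : ℤ) - 1 < (ℓ j : ℤ)

/-- Let `MS[i] = (p i, ℓ i)` be the matching statistics of `S` w.r.t. `R`
(0-based).  Let `j` be a head and let `j'` be the smallest head greater than `j`
(or `j' = |S|` in 0-based indexing, i.e. `|S|+1` in 1-based indexing, if none exists).
Then for every `i` with `j ≤ i < j'`, one has `ℓ i = ℓ j − (i − j)`, and the string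
`S[i .. i+ℓ_i−1]` occurs in `R` starting at position `p j + (i − j)`; i.e.
`(p j + (i−j), ℓ j − (i−j))` is a valid matching statistics entry for position `i`. -/
theorem head_run_valid_ms_entries {α : Type*} [LinearOrder α]
    (R S : List α) (p ℓ : ℕ → ℕ)
    (hUlen : ∀ i < S.length, ℓ i ≤ S.length - i)
    (hUocc : ∀ i < S.length, 0 < ℓ i → (S.drop i).take (ℓ i) <+: R.drop (p i))
    (hUmax : ∀ i < S.length, ∀ m, m ≤ S.length - i → (S.drop i).take m <:+: R → m ≤ ℓ i)
    (j j' : ℕ) (hj : j < S.length) (hjhead : IsMSHead ℓ j)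
    (hjj' : j < j') (hj'le : j' ≤ S.length)
    (hnohead : ∀ k, j < k → k < j' → ¬ IsMSHead ℓ k)
    (hj'head : j' = S.length ∨ IsMSHead ℓ j') :
    ∀ i, j ≤ i → i < j' →
      (ℓ i : ℤ) = (ℓ j : ℤ) - ((i : ℤ) - (j : ℤ)) ∧
      (S.drop i).take (ℓ i) <+: R.drop (p j + (i - j)) := by
  -- Key: the length equation, by induction
  have key : ∀ i, j ≤ i → i < j' → (ℓ i : ℤ) = (ℓ j : ℤ) - ((i : ℤ) - (j : ℤ)) := by
    intro i hji
    induction i, hji using Nat.le_induction with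
    | base => intro _; simp
    | succ n hn ih =>
      intro hlt
      have hnj' : n < j' := Nat.lt_of_succ_lt hlt
      have ihn := ih hnj'
      have hnS : n < S.length := lt_of_lt_of_le hnj' hj'le
      have hn1S : n + 1 < S.length ∨ n + 1 = S.length := by omega
      -- not a head:
      have hnh := hnohead (n+1) (by omega) hlt
      simp only [IsMSHead, Nat.add_sub_cancel] at hnh
      push_neg at hnh
      have hle : (ℓ (n+1) : ℤ) ≤ (ℓ n : ℤ) - 1 := hnh.2
      have hpos : 0 < ℓ n := by
        by_contra h
        have : ℓ n = 0 := by omega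
        rw [this] at hle
        push_cast at hle; omega
      -- occurrence at n, dropped by one, gives lower bound at n+1
      have hocc := hUocc n hnS hpos
      have hinf : (S.drop n).take (ℓ n) <:+: R :=
        hocc.isInfix.trans (R.drop_suffix (p n)).isInfix
      have hinf2 : (S.drop (n+1)).take (ℓ n - 1) <:+: R := by
        have := ((List.drop_suffix 1 ((S.drop n).take (ℓ n))).isInfix).trans hinf
        rwa [List.drop_take, List.drop_drop] at this
      have hlen1 : ℓ n - 1 ≤ S.length - (n+1) := by
        have := hUlen n hnS; omega
      have hS1 : n + 1 < S.length := by
        rcases hn1S with h | h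
        · exact h
        · exfalso
          -- then j' = S.length? we have n+1 ≤ j' and j' ≤ S.length = n+1, contradiction with hlt
          omega
      have hge : ℓ n - 1 ≤ ℓ (n+1) := hUmax (n+1) hS1 (ℓ n - 1) hlen1 hinf2
      push_cast [hpos] at *
      omega
  intro i hji hij'
  refine ⟨key i hji hij', ?_⟩
  have hkey := key i hji hij'
  have hli : ℓ i + (i - j) = ℓ j := by omega
  rcases Nat.eq_zero_or_pos (ℓ i) with h0 | hpos
  · simp [h0]
  · have hjpos : 0 < ℓ j := by omega
    have hocc := hUocc j hj hjpos
    have h := hocc.drop (i - j)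
    rw [List.drop_take, List.drop_drop, List.drop_drop] at h
    have e1 : ℓ j - (i - j) = ℓ i := by omega
    have e2 : j + (i - j) = i := by omega
    rw [e1, e2] at h
    exact h
end

section
/- Let R and S be strings as in the context, and let ip denote the insert-point function of S with respect to R. For positions 1 ≤ i, j ≤ |S|: if ip(i) < ip(j), then the suffix S[i..] is lexicographically smaller than the suffix S[j..]. -/
/-!
Suppose `S[j..] ≤ S[i..]` although `ip i < ip j`. Suffixes of `R` ranked below an insert point are
smaller than the corresponding suffix of `S`, and those ranked above it are not, so
`R[SA (ip i)..] < S[j..] ≤ S[i..] ≤ R[SA (ip j)..]`. A prefix shared by both ends of a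
lexicographic interval is shared by everything in between; by maximality of the matching
statistics, `U_i` and `U_j` are therefore prefixes of each other, hence equal. Then `ip i` witnesses
the first case in the definition of `ip j`, which forces `R[SA (ip j)..] < S[j..]`: a contradiction.
When `ℓ_i = 0` the suffix `S[i..]` starts with `$`, and the bound `S[i..] ≤ R[SA (ip j)..]` holds
because only the suffix of rank `0` of `R` can start with `#`.
-/

namespace List

variable {α : Type*}

theorem IsPrefix.prefix_take_of_isInfix {R X V : List α} {ℓ : ℕ}
    (hmax : ∀ m ≤ X.length, X.take m <:+: R → m ≤ ℓ) (hV : V <+: X) (hVR : V <:+: R) :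
    V <+: X.take ℓ := by
  rw [prefix_take_iff]
  refine ⟨hV, hmax _ hV.length_le ?_⟩
  rwa [← prefix_iff_eq_take.1 hV]

theorem take_append_singleton_prefix {X : List α} {ℓ : ℕ} {c : α} (h : X[ℓ]? = some c) :
    X.take ℓ ++ [c] <+: X := by
  rw [← Option.toList_some, ← h, ← take_add_one]
  exact take_prefix _ _

theorem not_isInfix_append_singleton {R U X : List α} {c : α}
    (hU : ∀ V, V <+: X → V <:+: R → V <+: U) (hUc : U ++ [c] <+: X) : ¬ U ++ [c] <:+: R :=
  fun h => by simpa using (hU _ hUc h).length_le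

variable [LinearOrder α]

theorem IsPrefix.of_le_of_le {u x y z : List α} (hx : u <+: x) (hz : u <+: z) (hxy : x ≤ y)
    (hyz : y ≤ z) : u <+: y := by
  induction u generalizing x y z with
  | nil => exact nil_prefix
  | cons a u ih =>
    obtain ⟨x, rfl, hux⟩ := cons_prefix_iff.1 hx
    obtain ⟨z, rfl, huz⟩ := cons_prefix_iff.1 hz
    rw [← not_lt] at hxy hyz
    cases y with
    | nil => exact absurd (nil_lt_cons _ _) hxy
    | cons b y =>
      simp only [cons_lt_cons_iff, not_or, not_and] at hxy hyz
      obtain rfl : b = a := le_antisymm (not_lt.1 hyz.1) (not_lt.1 hxy.1)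
      exact cons_prefix_cons.2 ⟨rfl, ih hux huz (not_lt.1 (hxy.2 rfl)) (not_lt.1 (hyz.2 rfl))⟩

theorem lt_append_iff_of_not_prefix {y w : List α} (z : List α) (h : ¬ w <+: y) :
    y < w ++ z ↔ y < w := by
  induction w generalizing y with
  | nil => exact absurd nil_prefix h
  | cons a w ih =>
    cases y with
    | nil => simp
    | cons b y =>
      simp only [cons_prefix_cons, not_and] at h
      simp only [cons_append, cons_lt_cons_iff]
      exact or_congr_right ⟨fun ⟨hb, hy⟩ => ⟨hb, (ih (h hb.symm)).1 hy⟩,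
        fun ⟨hb, hy⟩ => ⟨hb, (ih (h hb.symm)).2 hy⟩⟩

theorem singleton_le_of_forall_le {a : α} {l : List α} (hl : l ≠ []) (h : ∀ b ∈ l, a ≤ b) :
    [a] ≤ l := by
  obtain ⟨b, l, rfl⟩ := exists_cons_of_ne_nil hl
  rw [← not_lt, cons_lt_cons_iff]
  simp [not_lt.2 (h b mem_cons_self)]

end List

section InsertPoint

variable {α : Type*} [LinearOrder α]

/-- The paper compares `P k` with `U` followed by the mismatch character rather than with `X`;
`IsInsertPoint.of_not_prefix` shows that this makes no difference. -/
def IsInsertPoint (P : ℕ → List α) (n : ℕ) (U X : List α) (ip : ℕ) : Prop :=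
  ({k | k < n ∧ U <+: P k ∧ P k < X}.Nonempty →
      IsGreatest {k | k < n ∧ U <+: P k ∧ P k < X} ip) ∧
    (¬ {k | k < n ∧ U <+: P k ∧ P k < X}.Nonempty → IsLeast {k | k < n ∧ U <+: P k} ip)

namespace IsInsertPoint

variable {P : ℕ → List α} {n ip k : ℕ} {U X : List α}

theorem of_not_prefix {W : List α} (hWX : W <+: X) (hW : ∀ k < n, ¬ W <+: P k)
    (hmax : {k | k < n ∧ U <+: P k ∧ P k < W}.Nonempty →
      IsGreatest {k | k < n ∧ U <+: P k ∧ P k < W} ip)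
    (hmin : ¬ {k | k < n ∧ U <+: P k ∧ P k < W}.Nonempty →
      IsLeast {k | k < n ∧ U <+: P k} ip) :
    IsInsertPoint P n U X ip := by
  obtain ⟨T, rfl⟩ := hWX
  have hA : {k | k < n ∧ U <+: P k ∧ P k < W ++ T} = {k | k < n ∧ U <+: P k ∧ P k < W} :=
    Set.ext fun k => and_congr_right fun hk => and_congr_right fun _ =>
      List.lt_append_iff_of_not_prefix T (hW k hk)
  rw [IsInsertPoint, hA]
  exact ⟨hmax, hmin⟩

theorem mem (h : IsInsertPoint P n U X ip) : ip ∈ {k | k < n ∧ U <+: P k} := by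
  by_cases hA : {k | k < n ∧ U <+: P k ∧ P k < X}.Nonempty
  · exact ⟨(h.1 hA).1.1, (h.1 hA).1.2.1⟩
  · exact (h.2 hA).1

theorem isGreatest (h : IsInsertPoint P n U X ip) (hk : k < n) (hU : U <+: P k) (hkX : P k < X) :
    IsGreatest {k | k < n ∧ U <+: P k ∧ P k < X} ip :=
  h.1 ⟨k, hk, hU, hkX⟩

theorem apply_lt_of_lt (h : IsInsertPoint P n U X ip) (hP : StrictMonoOn P (Set.Iio n))
    (hUX : U <+: X) (hk : k < ip) : P k < X := by
  obtain ⟨hipn, hUip⟩ := h.mem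
  have hkip : P k < P ip := hP (hk.trans hipn) hipn hk
  by_cases hA : {k | k < n ∧ U <+: P k ∧ P k < X}.Nonempty
  · exact hkip.trans (h.1 hA).1.2.2
  · by_contra hkX
    have hUk : U <+: P k := hUX.of_le_of_le hUip (not_lt.1 hkX) hkip.le
    exact absurd ((h.2 hA).2 ⟨hk.trans hipn, hUk⟩) (not_le.2 hk)

theorem le_apply_of_lt (h : IsInsertPoint P n U X ip) (hP : StrictMonoOn P (Set.Iio n))
    (hUX : U <+: X) (hk : ip < k) (hkn : k < n) : X ≤ P k := by
  obtain ⟨hipn, hUip⟩ := h.mem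
  by_contra hkX
  rw [not_le] at hkX
  have hUk : U <+: P k := hUip.of_le_of_le hUX (hP hipn hkn hk).le hkX.le
  exact absurd ((h.isGreatest hkn hUk hkX).2 ⟨hkn, hUk, hkX⟩) (not_le.2 hk)

end IsInsertPoint

theorem dollar_cons_lt_drop_of_pos {R : List α} {hash dollar : α} {SA : ℕ → ℕ}
    (hRhash : ∀ m, R[m]? = some hash → m = R.length - 1)
    (hhashmin : ∀ a ∈ R, a ≠ hash → hash < a)
    (hdollarmin : ∀ a ∈ R, a ≠ hash → a ≠ dollar → dollar < a) (hdnotR : dollar ∉ R)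
    (hSAran : ∀ k < R.length, SA k < R.length)
    (hSA : StrictMonoOn (fun k => R.drop (SA k)) (Set.Iio R.length))
    {k : ℕ} (hk0 : 0 < k) (hk : k < R.length) (T : List α) : dollar :: T < R.drop (SA k) := by
  have hSAk := hSAran k hk
  have hmem : R[SA k] ∈ R := List.getElem_mem hSAk
  have hne : R[SA k] ≠ hash := by
    intro hy
    have hlast : SA k = R.length - 1 := hRhash _ (List.getElem?_eq_some_iff.2 ⟨hSAk, hy⟩)
    have hfirst : [hash] ≤ R.drop (SA 0) :=
      List.singleton_le_of_forall_le (by simpa using hSAran 0 (hk0.trans hk)) fun a ha =>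
        (eq_or_ne a hash).elim (fun h => h.ge) fun h => (hhashmin a (List.mem_of_mem_drop ha) h).le
    have hlt : R.drop (SA 0) < R.drop (SA k) := hSA (hk0.trans hk) hk hk0
    rw [List.drop_eq_getElem_cons hSAk, List.drop_of_length_le (show R.length ≤ SA k + 1 by omega),
      hy] at hlt
    exact lt_irrefl _ (hfirst.trans_lt hlt)
  rw [List.drop_eq_getElem_cons hSAk]
  exact List.Lex.rel (hdollarmin _ hmem hne fun h => hdnotR (h ▸ hmem))

end InsertPoint

theorem insert_point_lt_implies_suffix_lt_general {α : Type*} [LinearOrder α]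
    (R S : List α) (hash dollar : α)
    (SA : ℕ → ℕ) (ℓ : ℕ → ℕ) (c : ℕ → α) (ip : ℕ → ℕ)
    -- sentinel/context hypotheses
    (hRhash : ∀ m, R[m]? = some hash → m = R.length - 1)
    (hhashmin : ∀ a, (a ∈ R ∨ a ∈ S) → a ≠ hash → hash < a)
    (hdollarmin : ∀ a, (a ∈ R ∨ a ∈ S) → a ≠ hash → a ≠ dollar → dollar < a)
    (hSinR : ∀ a ∈ S, a ≠ dollar → a ∈ R)
    (hdnotR : dollar ∉ R)
    -- suffix array of R (0-based ranks and positions)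
    (hSAran : ∀ k < R.length, SA k < R.length)
    (hSAmono : ∀ k₁ k₂, k₁ < k₂ → k₂ < R.length →
      List.Lex (· < ·) (R.drop (SA k₁)) (R.drop (SA k₂)))
    -- matching statistics: U i = (S.drop i).take (ℓ i) is the longest prefix of the
    -- suffix S.drop i occurring as a substring of R; c i = S[i + ℓ i] is the mismatch character
    (hUocc : ∀ i < S.length, (S.drop i).take (ℓ i) <:+: R)
    (hUmax : ∀ i < S.length, ∀ m, m ≤ S.length - i → (S.drop i).take m <:+: R → m ≤ ℓ i)
    (hc : ∀ i < S.length, S[i + ℓ i]? = some (c i))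
    -- insert point
    (hip0 : ∀ i < S.length, ℓ i = 0 → ip i = 0)
    (hipmax : ∀ i < S.length, 0 < ℓ i →
      {k | k < R.length ∧ (S.drop i).take (ℓ i) <+: R.drop (SA k) ∧
        List.Lex (· < ·) (R.drop (SA k)) ((S.drop i).take (ℓ i) ++ [c i])}.Nonempty →
      IsGreatest {k | k < R.length ∧ (S.drop i).take (ℓ i) <+: R.drop (SA k) ∧
        List.Lex (· < ·) (R.drop (SA k)) ((S.drop i).take (ℓ i) ++ [c i])} (ip i))
    (hipmin : ∀ i < S.length, 0 < ℓ i →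
      ¬ {k | k < R.length ∧ (S.drop i).take (ℓ i) <+: R.drop (SA k) ∧
        List.Lex (· < ·) (R.drop (SA k)) ((S.drop i).take (ℓ i) ++ [c i])}.Nonempty →
      IsLeast {k | k < R.length ∧ (S.drop i).take (ℓ i) <+: R.drop (SA k)} (ip i))
    (i j : ℕ) (hi : i < S.length) (hj : j < S.length)
    (hlt : ip i < ip j) :
    List.Lex (· < ·) (S.drop i) (S.drop j) := by
  have hSA : StrictMonoOn (fun k => R.drop (SA k)) (Set.Iio R.length) :=
    fun a _ b hb hab => hSAmono a b hab hb
  have hlongest : ∀ i < S.length, ∀ V, V <+: S.drop i → V <:+: R → V <+: (S.drop i).take (ℓ i) :=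
    fun i hi _ => List.IsPrefix.prefix_take_of_isInfix fun m hm => hUmax i hi m (by simpa using hm)
  have hIP : ∀ i < S.length, 0 < ℓ i →
      IsInsertPoint (fun k => R.drop (SA k)) R.length ((S.drop i).take (ℓ i)) (S.drop i) (ip i) :=
    fun i hi hpos =>
      have hW := List.take_append_singleton_prefix (by rw [List.getElem?_drop]; exact hc i hi)
      .of_not_prefix hW (fun _ _ hk => List.not_isInfix_append_singleton (hlongest i hi) hW
        (hk.isInfix.trans (List.drop_suffix _ _).isInfix)) (hipmax i hi hpos) (hipmin i hi hpos)
  by_contra hji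
  replace hji : S.drop j ≤ S.drop i := not_lt.1 hji
  have hℓj : 0 < ℓ j := Nat.pos_of_ne_zero fun h => by simp [hip0 j hj h] at hlt
  obtain ⟨hb, hUjb⟩ := (hIP j hj hℓj).mem
  have hib : S.drop i ≤ R.drop (SA (ip j)) := by
    rcases (ℓ i).eq_zero_or_pos with h0 | hpos
    · have hSi : S[i] = dollar := by
        by_contra hne
        have h1 := hUmax i hi 1 (by omega) (by
          rw [List.take_one_drop_eq_of_lt_length hi, List.singleton_infix_iff]
          exact hSinR _ (List.getElem_mem hi) hne)
        omega
      rw [hip0 i hi h0] at hlt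
      rw [List.drop_eq_getElem_cons hi, hSi]
      exact (dollar_cons_lt_drop_of_pos hRhash (fun a ha => hhashmin a (.inl ha))
        (fun a ha => hdollarmin a (.inl ha)) hdnotR hSAran hSA hlt hb _).le
    · exact (hIP i hi hpos).le_apply_of_lt hSA (List.take_prefix _ _) hlt hb
  have hUji := hlongest i hi _ ((List.take_prefix _ _).of_le_of_le hUjb hji hib) (hUocc j hj)
  have hℓi : 0 < ℓ i := Nat.pos_of_ne_zero fun h0 => by
    simp only [h0, List.take_zero, List.prefix_nil, List.take_eq_nil_iff,
      List.drop_eq_nil_iff] at hUji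
    omega
  obtain ⟨ha, hUia⟩ := (hIP i hi hℓi).mem
  have hja : R.drop (SA (ip i)) < S.drop j :=
    (hIP j hj hℓj).apply_lt_of_lt hSA (List.take_prefix _ _) hlt
  have hUij := hlongest j hj _ (hUia.of_le_of_le (List.take_prefix _ _) hja.le hji) (hUocc i hi)
  have hU : (S.drop i).take (ℓ i) = (S.drop j).take (ℓ j) := antisymm hUij hUji
  have hbj := ((hIP j hj hℓj).isGreatest ha (hU ▸ hUia) hja).1.2.2
  exact lt_irrefl _ (hbj.trans_le (hji.trans hib))

/-- if `ip i < ip j` then the suffix `S.drop i` is lexicographically smaller than `S.drop j`. -/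
theorem insert_point_lt_implies_suffix_lt {α : Type*} [LinearOrder α]
    (R S : List α) (hash dollar : α)
    (SA : ℕ → ℕ) (ℓ : ℕ → ℕ) (c : ℕ → α) (ip : ℕ → ℕ)
    -- sentinel/context hypotheses
    (hRne : R ≠ []) (hSne : S ≠ [])
    (hRlast : R[R.length - 1]? = some hash)
    (hRhash : ∀ m, R[m]? = some hash → m = R.length - 1)
    (hSlast : S[S.length - 1]? = some dollar)
    (hSdollar : ∀ m, S[m]? = some dollar → m = S.length - 1)
    (hhd : hash < dollar)
    (hhashmin : ∀ a, (a ∈ R ∨ a ∈ S) → a ≠ hash → hash < a)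
    (hdollarmin : ∀ a, (a ∈ R ∨ a ∈ S) → a ≠ hash → a ≠ dollar → dollar < a)
    (hSinR : ∀ a ∈ S, a ≠ dollar → a ∈ R)
    (hdnotR : dollar ∉ R)
    -- suffix array of R (0-based ranks and positions)
    (hSAran : ∀ k < R.length, SA k < R.length)
    (hSAsurj : ∀ m < R.length, ∃ k < R.length, SA k = m)
    (hSAmono : ∀ k₁ k₂, k₁ < k₂ → k₂ < R.length →
      List.Lex (· < ·) (R.drop (SA k₁)) (R.drop (SA k₂)))
    -- matching statistics: U i = (S.drop i).take (ℓ i) is the longest prefix of the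
    -- suffix S.drop i occurring as a substring of R; c i = S[i + ℓ i] is the mismatch character
    (hUlen : ∀ i < S.length, ℓ i ≤ S.length - i)
    (hUocc : ∀ i < S.length, (S.drop i).take (ℓ i) <:+: R)
    (hUmax : ∀ i < S.length, ∀ m, m ≤ S.length - i → (S.drop i).take m <:+: R → m ≤ ℓ i)
    (hc : ∀ i < S.length, S[i + ℓ i]? = some (c i))
    -- insert point
    (hip0 : ∀ i < S.length, ℓ i = 0 → ip i = 0)
    (hipmax : ∀ i < S.length, 0 < ℓ i →
      {k | k < R.length ∧ (S.drop i).take (ℓ i) <+: R.drop (SA k) ∧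
        List.Lex (· < ·) (R.drop (SA k)) ((S.drop i).take (ℓ i) ++ [c i])}.Nonempty →
      IsGreatest {k | k < R.length ∧ (S.drop i).take (ℓ i) <+: R.drop (SA k) ∧
        List.Lex (· < ·) (R.drop (SA k)) ((S.drop i).take (ℓ i) ++ [c i])} (ip i))
    (hipmin : ∀ i < S.length, 0 < ℓ i →
      ¬ {k | k < R.length ∧ (S.drop i).take (ℓ i) <+: R.drop (SA k) ∧
        List.Lex (· < ·) (R.drop (SA k)) ((S.drop i).take (ℓ i) ++ [c i])}.Nonempty →
      IsLeast {k | k < R.length ∧ (S.drop i).take (ℓ i) <+: R.drop (SA k)} (ip i))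
    (i j : ℕ) (hi : i < S.length) (hj : j < S.length)
    (hlt : ip i < ip j) :
    List.Lex (· < ·) (S.drop i) (S.drop j) :=
  insert_point_lt_implies_suffix_lt_general R S hash dollar SA ℓ c ip hRhash hhashmin hdollarmin
    hSinR hdnotR hSAran hSAmono hUocc hUmax hc hip0 hipmax hipmin i j hi hj hlt
end

section
/- Let R and S be strings as in the context, with insert points ip, matching-factor lengths ℓ, mismatch characters c, and flags x. For positions 1 ≤ i, j ≤ |S| with ip(i) = ip(j): if ℓ_i < ℓ_j and x_i = S, then the suffix S[i..] is lexicographically smaller than the suffix S[j..]. -/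
/-! Let `q` be the common insert point. Both `U_i` and `U_j` are prefixes of the suffix of `R` of
rank `q`, so `S[j..]` agrees with that suffix on its first `ℓ_i + 1` characters, while `S[i..]`
agrees on the first `ℓ_i` and then has `c_i`, smaller than the next character there. With flag `S`
the case `ℓ_i = 0` cannot occur: then `q` is the rank of the smallest suffix, which starts with a
character `≤ #`, and no character of `S` is below `#`. -/

/-- The flag associated with a position of `S`: `S` = smaller, `L` = larger. -/
inductive MSFlag
  | S
  | L

namespace List

variable {α : Type*} [LinearOrder α]

theorem lt_of_take_eq_of_getElem?_lt {l₁ l₂ : List α} {m : ℕ} {a b : α}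
    (htake : l₁.take m = l₂.take m) (h₁ : l₁[m]? = some a) (h₂ : l₂[m]? = some b)
    (hab : a < b) : l₁ < l₂ := by
  obtain ⟨hm₁, rfl⟩ := getElem?_eq_some_iff.1 h₁
  obtain ⟨hm₂, rfl⟩ := getElem?_eq_some_iff.1 h₂
  rw [← take_append_drop m l₁, ← take_append_drop m l₂, htake, drop_eq_getElem_cons hm₁,
    drop_eq_getElem_cons hm₂]
  exact append_left_lt (cons_lt_cons_iff.2 (Or.inl hab))

theorem lt_of_take_isPrefix_of_take_isPrefix {T l₁ l₂ : List α} {m n : ℕ} {a b : α}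
    (h₁ : l₁.take m <+: T) (h₂ : l₂.take n <+: T) (hmn : m < n) (hm : m < l₂.length)
    (ha : l₁[m]? = some a) (hb : T[m]? = some b) (hab : a < b) : l₁ < l₂ := by
  have hm₁ : m < l₁.length := (getElem?_eq_some_iff.1 ha).1
  have htake₁ : l₁.take m = T.take m := by
    simpa [Nat.min_eq_left hm₁.le] using prefix_iff_eq_take.1 h₁
  have htake₂ : l₂.take m = T.take m := by
    have := prefix_iff_eq_take.1 ((take_prefix m _).trans h₂)
    rwa [take_take, length_take, Nat.min_eq_left hmn.le, Nat.min_eq_left hm.le] at this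
  refine lt_of_take_eq_of_getElem?_lt (htake₁.trans htake₂.symm) ha ?_ hab
  rw [← getElem?_take_of_lt hmn, ← hb, prefix_iff_getElem?.1 h₂ m (by simp [hmn, hm])]
  exact getElem?_eq_getElem _

end List

theorem le_getElem_of_sa_zero {α : Type*} [LinearOrder α] {R : List α} {SA : ℕ → ℕ}
    (hsurj : ∀ m < R.length, ∃ k < R.length, SA k = m)
    (hmono : ∀ k₁ k₂, k₁ < k₂ → k₂ < R.length → R.drop (SA k₁) < R.drop (SA k₂))
    {a : α} (ha : R[SA 0]? = some a) {m : ℕ} (hm : m < R.length) : a ≤ R[m] := by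
  obtain ⟨k, hk, rfl⟩ := hsurj m hm
  rcases Nat.eq_zero_or_pos k with rfl | hk₀
  · simp_all
  · obtain ⟨h₀, rfl⟩ := List.getElem?_eq_some_iff.1 ha
    have := hmono 0 k hk₀ hk
    rw [List.drop_eq_getElem_cons h₀, List.drop_eq_getElem_cons hm] at this
    exact List.left_le_left_of_cons_le_cons (List.le_of_lt this)

theorem same_ip_len_lt_flag_S_implies_suffix_lt_general {α : Type*} [LinearOrder α]
    (R S : List α) (hash : α)
    (SA : ℕ → ℕ) (ℓ : ℕ → ℕ) (c : ℕ → α) (ip : ℕ → ℕ) (x : ℕ → MSFlag)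
    -- sentinel/context hypotheses
    (hRlast : R[R.length - 1]? = some hash)
    (hhashmin : ∀ a, (a ∈ R ∨ a ∈ S) → a ≠ hash → hash < a)
    -- suffix array of R (0-based ranks and positions)
    (hSAsurj : ∀ m < R.length, ∃ k < R.length, SA k = m)
    (hSAmono : ∀ k₁ k₂, k₁ < k₂ → k₂ < R.length →
      List.Lex (· < ·) (R.drop (SA k₁)) (R.drop (SA k₂)))
    -- matching statistics: U i = (S.drop i).take (ℓ i) is the longest prefix of the
    -- suffix S.drop i occurring as a substring of R; c i = S[i + ℓ i] is the mismatch character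
    (hc : ∀ i < S.length, S[i + ℓ i]? = some (c i))
    -- insert point
    (hip0 : ∀ i < S.length, ℓ i = 0 → ip i = 0)
    (hipmax : ∀ i < S.length, 0 < ℓ i →
      {k | k < R.length ∧ (S.drop i).take (ℓ i) <+: R.drop (SA k) ∧
        List.Lex (· < ·) (R.drop (SA k)) ((S.drop i).take (ℓ i) ++ [c i])}.Nonempty →
      IsGreatest {k | k < R.length ∧ (S.drop i).take (ℓ i) <+: R.drop (SA k) ∧
        List.Lex (· < ·) (R.drop (SA k)) ((S.drop i).take (ℓ i) ++ [c i])} (ip i))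
    (hipmin : ∀ i < S.length, 0 < ℓ i →
      ¬ {k | k < R.length ∧ (S.drop i).take (ℓ i) <+: R.drop (SA k) ∧
        List.Lex (· < ·) (R.drop (SA k)) ((S.drop i).take (ℓ i) ++ [c i])}.Nonempty →
      IsLeast {k | k < R.length ∧ (S.drop i).take (ℓ i) <+: R.drop (SA k)} (ip i))
    -- the flag x: x i = MSFlag.S iff c i < R[SA (ip i) + ℓ i], and x i = MSFlag.L otherwise
    (hx : ∀ i < S.length, (x i = MSFlag.S ↔ ∃ a, R[SA (ip i) + ℓ i]? = some a ∧ c i < a))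
    (i j : ℕ) (hi : i < S.length) (hj : j < S.length)
    (hipeq : ip i = ip j) (hlen : ℓ i < ℓ j) (hxi : x i = MSFlag.S) :
    List.Lex (· < ·) (S.drop i) (S.drop j) := by
  obtain ⟨a, ha, hca⟩ := (hx i hi).1 hxi
  rcases Nat.eq_zero_or_pos (ℓ i) with hℓ₀ | hℓ
  · rw [hℓ₀, hip0 i hi hℓ₀, add_zero] at ha
    obtain ⟨hlast, hR_hash⟩ := List.getElem?_eq_some_iff.1 hRlast
    have ha_le : a ≤ hash := hR_hash ▸ le_getElem_of_sa_zero hSAsurj hSAmono ha hlast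
    have hash_le : hash ≤ c i := by
      rcases eq_or_ne (c i) hash with h | h
      · exact h.ge
      · exact (hhashmin _ (Or.inr (List.mem_of_getElem? (hc i hi))) h).le
    exact ((hca.trans_le (ha_le.trans hash_le)).false).elim
  · have hU : ∀ k < S.length, 0 < ℓ k → (S.drop k).take (ℓ k) <+: R.drop (SA (ip k)) :=
      fun k hk hℓk => (em _).elim (fun hne => (hipmax k hk hℓk hne).1.2.1)
        (fun hne => (hipmin k hk hℓk hne).1.2)
    have hj_len : ℓ i < (S.drop j).length := by
      have := (List.getElem?_eq_some_iff.1 (hc j hj)).1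
      simp only [List.length_drop]; omega
    refine List.lt_of_take_isPrefix_of_take_isPrefix (hU i hi hℓ)
      (hipeq ▸ hU j hj (hℓ.trans hlen)) hlen hj_len ?_ ?_ hca
    · rw [List.getElem?_drop]; exact hc i hi
    · rw [List.getElem?_drop]; exact ha

/-- if `ip i = ip j`, `ℓ i < ℓ j` and `x i = S`, then `S.drop i` is lexicographically smaller than `S.drop j`. -/
theorem same_ip_len_lt_flag_S_implies_suffix_lt {α : Type*} [LinearOrder α]
    (R S : List α) (hash dollar : α)
    (SA : ℕ → ℕ) (ℓ : ℕ → ℕ) (c : ℕ → α) (ip : ℕ → ℕ) (x : ℕ → MSFlag)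
    -- sentinel/context hypotheses
    (hRne : R ≠ []) (hSne : S ≠ [])
    (hRlast : R[R.length - 1]? = some hash)
    (hRhash : ∀ m, R[m]? = some hash → m = R.length - 1)
    (hSlast : S[S.length - 1]? = some dollar)
    (hSdollar : ∀ m, S[m]? = some dollar → m = S.length - 1)
    (hhd : hash < dollar)
    (hhashmin : ∀ a, (a ∈ R ∨ a ∈ S) → a ≠ hash → hash < a)
    (hdollarmin : ∀ a, (a ∈ R ∨ a ∈ S) → a ≠ hash → a ≠ dollar → dollar < a)
    (hSinR : ∀ a ∈ S, a ≠ dollar → a ∈ R)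
    (hdnotR : dollar ∉ R)
    -- suffix array of R (0-based ranks and positions)
    (hSAran : ∀ k < R.length, SA k < R.length)
    (hSAsurj : ∀ m < R.length, ∃ k < R.length, SA k = m)
    (hSAmono : ∀ k₁ k₂, k₁ < k₂ → k₂ < R.length →
      List.Lex (· < ·) (R.drop (SA k₁)) (R.drop (SA k₂)))
    -- matching statistics: U i = (S.drop i).take (ℓ i) is the longest prefix of the
    -- suffix S.drop i occurring as a substring of R; c i = S[i + ℓ i] is the mismatch character
    (hUlen : ∀ i < S.length, ℓ i ≤ S.length - i)
    (hUocc : ∀ i < S.length, (S.drop i).take (ℓ i) <:+: R)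
    (hUmax : ∀ i < S.length, ∀ m, m ≤ S.length - i → (S.drop i).take m <:+: R → m ≤ ℓ i)
    (hc : ∀ i < S.length, S[i + ℓ i]? = some (c i))
    -- insert point
    (hip0 : ∀ i < S.length, ℓ i = 0 → ip i = 0)
    (hipmax : ∀ i < S.length, 0 < ℓ i →
      {k | k < R.length ∧ (S.drop i).take (ℓ i) <+: R.drop (SA k) ∧
        List.Lex (· < ·) (R.drop (SA k)) ((S.drop i).take (ℓ i) ++ [c i])}.Nonempty →
      IsGreatest {k | k < R.length ∧ (S.drop i).take (ℓ i) <+: R.drop (SA k) ∧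
        List.Lex (· < ·) (R.drop (SA k)) ((S.drop i).take (ℓ i) ++ [c i])} (ip i))
    (hipmin : ∀ i < S.length, 0 < ℓ i →
      ¬ {k | k < R.length ∧ (S.drop i).take (ℓ i) <+: R.drop (SA k) ∧
        List.Lex (· < ·) (R.drop (SA k)) ((S.drop i).take (ℓ i) ++ [c i])}.Nonempty →
      IsLeast {k | k < R.length ∧ (S.drop i).take (ℓ i) <+: R.drop (SA k)} (ip i))
    -- the flag x: x i = MSFlag.S iff c i < R[SA (ip i) + ℓ i], and x i = MSFlag.L otherwise
    (hqran : ∀ i < S.length, SA (ip i) + ℓ i < R.length)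
    (hx : ∀ i < S.length, (x i = MSFlag.S ↔ ∃ a, R[SA (ip i) + ℓ i]? = some a ∧ c i < a))
    (i j : ℕ) (hi : i < S.length) (hj : j < S.length)
    (hipeq : ip i = ip j) (hlen : ℓ i < ℓ j) (hxi : x i = MSFlag.S) :
    List.Lex (· < ·) (S.drop i) (S.drop j) :=
  same_ip_len_lt_flag_S_implies_suffix_lt_general R S hash SA ℓ c ip x hRlast hhashmin hSAsurj
    hSAmono hc hip0 hipmax hipmin hx i j hi hj hipeq hlen hxi
end

section
/- Let R and S be strings as in the context, with insert points ip, matching-factor lengths ℓ, mismatch characters c, and flags x. For positions 1 ≤ i, j ≤ |S| with ip(i) = ip(j): if ℓ_i < ℓ_j and x_i = L, then the suffix S[j..] is lexicographically smaller than the suffix S[i..]. -/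
namespace List

variable {α : Type*}

theorem lex_of_append_singleton_prefix {r : α → α → Prop} {u l₁ l₂ : List α} {a b : α}
    (h₁ : u ++ [a] <+: l₁) (h₂ : u ++ [b] <+: l₂) (hab : r a b) : Lex r l₁ l₂ := by
  obtain ⟨t₁, rfl⟩ := h₁
  obtain ⟨t₂, rfl⟩ := h₂
  simpa using Lex.append_left r (Lex.rel hab) u

theorem IsPrefix.append_getElem {u l : List α} {n : ℕ} (h : u <+: l) (hn : u.length = n)
    (hlen : n < l.length) : u ++ [l[n]] <+: l := by
  subst hn
  have e := take_append_getElem hlen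
  rw [← prefix_iff_eq_take.mp h] at e
  exact e ▸ take_prefix _ _

theorem length_take_drop_of_getElem?_eq_some {l : List α} {i n : ℕ} {a : α}
    (h : l[i + n]? = some a) : ((l.drop i).take n).length = n := by
  have := (getElem?_eq_some_iff.mp h).1
  simp only [length_take, length_drop]
  omega

theorem take_drop_add_one_of_getElem?_eq_some {l : List α} {i n : ℕ} {a : α}
    (h : l[i + n]? = some a) : (l.drop i).take (n + 1) = (l.drop i).take n ++ [a] := by
  simp [take_add_one, getElem?_drop, h]

end List

theorem prefix_drop_of_insert_point {α : Type*} [LT α] {R U : List α} {c : α}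
    {SA : ℕ → ℕ} {p : ℕ}
    (hmax : {k | k < R.length ∧ U <+: R.drop (SA k) ∧
        List.Lex (· < ·) (R.drop (SA k)) (U ++ [c])}.Nonempty →
      IsGreatest {k | k < R.length ∧ U <+: R.drop (SA k) ∧
        List.Lex (· < ·) (R.drop (SA k)) (U ++ [c])} p)
    (hmin : ¬ {k | k < R.length ∧ U <+: R.drop (SA k) ∧
        List.Lex (· < ·) (R.drop (SA k)) (U ++ [c])}.Nonempty →
      IsLeast {k | k < R.length ∧ U <+: R.drop (SA k)} p) :
    U <+: R.drop (SA p) := by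
  by_cases hne : {k | k < R.length ∧ U <+: R.drop (SA k) ∧
      List.Lex (· < ·) (R.drop (SA k)) (U ++ [c])}.Nonempty
  · exact (hmax hne).1.2.1
  · exact (hmin hne).1.2

theorem same_ip_len_lt_flag_L_implies_suffix_gt_general {α : Type*} [LinearOrder α]
    (R S : List α)
    (SA : ℕ → ℕ) (ℓ : ℕ → ℕ) (c : ℕ → α) (ip : ℕ → ℕ) (x : ℕ → MSFlag)
    -- matching statistics: U i = (S.drop i).take (ℓ i) is the longest prefix of the
    -- suffix S.drop i occurring as a substring of R; c i = S[i + ℓ i] is the mismatch character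
    (hUmax : ∀ i < S.length, ∀ m, m ≤ S.length - i → (S.drop i).take m <:+: R → m ≤ ℓ i)
    (hc : ∀ i < S.length, S[i + ℓ i]? = some (c i))
    -- insert point
    (hipmax : ∀ i < S.length, 0 < ℓ i →
      {k | k < R.length ∧ (S.drop i).take (ℓ i) <+: R.drop (SA k) ∧
        List.Lex (· < ·) (R.drop (SA k)) ((S.drop i).take (ℓ i) ++ [c i])}.Nonempty →
      IsGreatest {k | k < R.length ∧ (S.drop i).take (ℓ i) <+: R.drop (SA k) ∧
        List.Lex (· < ·) (R.drop (SA k)) ((S.drop i).take (ℓ i) ++ [c i])} (ip i))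
    (hipmin : ∀ i < S.length, 0 < ℓ i →
      ¬ {k | k < R.length ∧ (S.drop i).take (ℓ i) <+: R.drop (SA k) ∧
        List.Lex (· < ·) (R.drop (SA k)) ((S.drop i).take (ℓ i) ++ [c i])}.Nonempty →
      IsLeast {k | k < R.length ∧ (S.drop i).take (ℓ i) <+: R.drop (SA k)} (ip i))
    -- the flag x: x i = MSFlag.S iff c i < R[SA (ip i) + ℓ i], and x i = MSFlag.L otherwise
    (hqran : ∀ i < S.length, SA (ip i) + ℓ i < R.length)
    (hx : ∀ i < S.length, (x i = MSFlag.S ↔ ∃ a, R[SA (ip i) + ℓ i]? = some a ∧ c i < a))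
    (i j : ℕ) (hi : i < S.length) (hj : j < S.length)
    (hipeq : ip i = ip j) (hlen : ℓ i < ℓ j) (hxi : x i = MSFlag.L) :
    List.Lex (· < ·) (S.drop j) (S.drop i) := by
  have hmatch_prefix : ∀ k < S.length, (S.drop k).take (ℓ k) <+: R.drop (SA (ip k)) :=
    fun k hk => (ℓ k).eq_zero_or_pos.elim (fun h0 => by simp [h0])
      fun h0 => prefix_drop_of_insert_point (hipmax k hk h0) (hipmin k hk h0)
  set q := SA (ip i)
  set U := (S.drop i).take (ℓ i)
  have hq : ℓ i < (R.drop q).length := by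
    have := hqran i hi
    grind
  set a := (R.drop q)[ℓ i]
  have hU_length : U.length = ℓ i := List.length_take_drop_of_getElem?_eq_some (hc i hi)
  have hUa : U ++ [a] <+: R.drop q := (hmatch_prefix i hi).append_getElem hU_length hq
  have hUc : (S.drop i).take (ℓ i + 1) = U ++ [c i] :=
    List.take_drop_add_one_of_getElem?_eq_some (hc i hi)
  have ha_le : a ≤ c i := by
    by_contra! hlt
    have hxS :=
      (hx i hi).2 ⟨a, List.getElem?_drop.symm.trans (List.getElem?_eq_getElem hq), hlt⟩
    simp [hxi] at hxS
  have ha_ne : a ≠ c i := by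
    intro ha_eq
    have hUc_infix : (S.drop i).take (ℓ i + 1) <:+: R :=
      hUc ▸ ha_eq ▸ hUa.isInfix.trans (List.drop_suffix _ _).isInfix
    exact Nat.not_succ_le_self _ (hUmax i hi (ℓ i + 1) (by grind) hUc_infix)
  have hUa_j : U ++ [a] <+: S.drop j :=
    (List.prefix_of_prefix_length_le hUa (hipeq ▸ hmatch_prefix j hj)
      (by simp [hU_length, List.length_take_drop_of_getElem?_eq_some (hc j hj)]; omega)).trans
      (List.take_prefix _ _)
  exact List.lex_of_append_singleton_prefix hUa_j (hUc ▸ List.take_prefix _ _)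
    (ha_le.lt_of_ne ha_ne)

/-- if `ip i = ip j`, `ℓ i < ℓ j` and `x i = L`, then `S.drop j` is lexicographically smaller than `S.drop i`. -/
theorem same_ip_len_lt_flag_L_implies_suffix_gt {α : Type*} [LinearOrder α]
    (R S : List α) (hash dollar : α)
    (SA : ℕ → ℕ) (ℓ : ℕ → ℕ) (c : ℕ → α) (ip : ℕ → ℕ) (x : ℕ → MSFlag)
    -- sentinel/context hypotheses
    (hRne : R ≠ []) (hSne : S ≠ [])
    (hRlast : R[R.length - 1]? = some hash)
    (hRhash : ∀ m, R[m]? = some hash → m = R.length - 1)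
    (hSlast : S[S.length - 1]? = some dollar)
    (hSdollar : ∀ m, S[m]? = some dollar → m = S.length - 1)
    (hhd : hash < dollar)
    (hhashmin : ∀ a, (a ∈ R ∨ a ∈ S) → a ≠ hash → hash < a)
    (hdollarmin : ∀ a, (a ∈ R ∨ a ∈ S) → a ≠ hash → a ≠ dollar → dollar < a)
    (hSinR : ∀ a ∈ S, a ≠ dollar → a ∈ R)
    (hdnotR : dollar ∉ R)
    -- suffix array of R (0-based ranks and positions)
    (hSAran : ∀ k < R.length, SA k < R.length)
    (hSAsurj : ∀ m < R.length, ∃ k < R.length, SA k = m)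
    (hSAmono : ∀ k₁ k₂, k₁ < k₂ → k₂ < R.length →
      List.Lex (· < ·) (R.drop (SA k₁)) (R.drop (SA k₂)))
    -- matching statistics: U i = (S.drop i).take (ℓ i) is the longest prefix of the
    -- suffix S.drop i occurring as a substring of R; c i = S[i + ℓ i] is the mismatch character
    (hUlen : ∀ i < S.length, ℓ i ≤ S.length - i)
    (hUocc : ∀ i < S.length, (S.drop i).take (ℓ i) <:+: R)
    (hUmax : ∀ i < S.length, ∀ m, m ≤ S.length - i → (S.drop i).take m <:+: R → m ≤ ℓ i)
    (hc : ∀ i < S.length, S[i + ℓ i]? = some (c i))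
    -- insert point
    (hip0 : ∀ i < S.length, ℓ i = 0 → ip i = 0)
    (hipmax : ∀ i < S.length, 0 < ℓ i →
      {k | k < R.length ∧ (S.drop i).take (ℓ i) <+: R.drop (SA k) ∧
        List.Lex (· < ·) (R.drop (SA k)) ((S.drop i).take (ℓ i) ++ [c i])}.Nonempty →
      IsGreatest {k | k < R.length ∧ (S.drop i).take (ℓ i) <+: R.drop (SA k) ∧
        List.Lex (· < ·) (R.drop (SA k)) ((S.drop i).take (ℓ i) ++ [c i])} (ip i))
    (hipmin : ∀ i < S.length, 0 < ℓ i →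
      ¬ {k | k < R.length ∧ (S.drop i).take (ℓ i) <+: R.drop (SA k) ∧
        List.Lex (· < ·) (R.drop (SA k)) ((S.drop i).take (ℓ i) ++ [c i])}.Nonempty →
      IsLeast {k | k < R.length ∧ (S.drop i).take (ℓ i) <+: R.drop (SA k)} (ip i))
    -- the flag x: x i = MSFlag.S iff c i < R[SA (ip i) + ℓ i], and x i = MSFlag.L otherwise
    (hqran : ∀ i < S.length, SA (ip i) + ℓ i < R.length)
    (hx : ∀ i < S.length, (x i = MSFlag.S ↔ ∃ a, R[SA (ip i) + ℓ i]? = some a ∧ c i < a))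
    (i j : ℕ) (hi : i < S.length) (hj : j < S.length)
    (hipeq : ip i = ip j) (hlen : ℓ i < ℓ j) (hxi : x i = MSFlag.L) :
    List.Lex (· < ·) (S.drop j) (S.drop i) :=
  same_ip_len_lt_flag_L_implies_suffix_gt_general R S SA ℓ c ip x hUmax hc hipmax hipmin hqran hx i
    j hi hj hipeq hlen hxi
end

section
/- Let R and S be strings as in the context, with insert points ip. Let 1 < i, j ≤ |S| be positions of S such that ip(i) = ip(j) and neither i nor j is an insert-head. Then the characters preceding the two suffixes coincide and equal the character preceding the corresponding suffix of R: S[i−1] = S[j−1] = R[SA_R[ip(i)] − 1]. -/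
/-- Position `j` (0-based) of `S` is an *insert-head* if `j = 0` (i.e. `j = 1`
in 1-based indexing) or `SA (ip j) ≠ SA (ip (j-1)) + 1`. -/
def IsInsertHead (SA ip : ℕ → ℕ) (j : ℕ) : Prop :=
  j = 0 ∨ SA (ip j) ≠ SA (ip (j - 1)) + 1

/-- if `0 < i, j < |S|` (i.e. `1 < i, j ≤ |S|` 1-based), `ip i = ip j`, and neither `i` nor `j` is an insert-head, then `S[i-1] = S[j-1] = R[SA (ip i) - 1]` (the positions being well defined, i.e. `SA (ip i) ≥ 1` in 0-based indexing). -/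
theorem non_insert_heads_same_bucket_same_preceding_char {α : Type*} [LinearOrder α]
    (R S : List α) (hash dollar : α)
    (SA : ℕ → ℕ) (ℓ : ℕ → ℕ) (c : ℕ → α) (ip : ℕ → ℕ)
    -- sentinel/context hypotheses
    (hRne : R ≠ []) (hSne : S ≠ [])
    (hRlast : R[R.length - 1]? = some hash)
    (hRhash : ∀ m, R[m]? = some hash → m = R.length - 1)
    (hSlast : S[S.length - 1]? = some dollar)
    (hSdollar : ∀ m, S[m]? = some dollar → m = S.length - 1)
    (hhd : hash < dollar)
    (hhashmin : ∀ a, (a ∈ R ∨ a ∈ S) → a ≠ hash → hash < a)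
    (hdollarmin : ∀ a, (a ∈ R ∨ a ∈ S) → a ≠ hash → a ≠ dollar → dollar < a)
    (hSinR : ∀ a ∈ S, a ≠ dollar → a ∈ R)
    (hdnotR : dollar ∉ R)
    -- suffix array of R (0-based ranks and positions)
    (hSAran : ∀ k < R.length, SA k < R.length)
    (hSAsurj : ∀ m < R.length, ∃ k < R.length, SA k = m)
    (hSAmono : ∀ k₁ k₂, k₁ < k₂ → k₂ < R.length →
      List.Lex (· < ·) (R.drop (SA k₁)) (R.drop (SA k₂)))
    -- matching statistics: U i = (S.drop i).take (ℓ i) is the longest prefix of the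
    -- suffix S.drop i occurring as a substring of R; c i = S[i + ℓ i] is the mismatch character
    (hUlen : ∀ i < S.length, ℓ i ≤ S.length - i)
    (hUocc : ∀ i < S.length, (S.drop i).take (ℓ i) <:+: R)
    (hUmax : ∀ i < S.length, ∀ m, m ≤ S.length - i → (S.drop i).take m <:+: R → m ≤ ℓ i)
    (hc : ∀ i < S.length, S[i + ℓ i]? = some (c i))
    -- insert point
    (hip0 : ∀ i < S.length, ℓ i = 0 → ip i = 0)
    (hipmax : ∀ i < S.length, 0 < ℓ i →
      {k | k < R.length ∧ (S.drop i).take (ℓ i) <+: R.drop (SA k) ∧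
        List.Lex (· < ·) (R.drop (SA k)) ((S.drop i).take (ℓ i) ++ [c i])}.Nonempty →
      IsGreatest {k | k < R.length ∧ (S.drop i).take (ℓ i) <+: R.drop (SA k) ∧
        List.Lex (· < ·) (R.drop (SA k)) ((S.drop i).take (ℓ i) ++ [c i])} (ip i))
    (hipmin : ∀ i < S.length, 0 < ℓ i →
      ¬ {k | k < R.length ∧ (S.drop i).take (ℓ i) <+: R.drop (SA k) ∧
        List.Lex (· < ·) (R.drop (SA k)) ((S.drop i).take (ℓ i) ++ [c i])}.Nonempty →
      IsLeast {k | k < R.length ∧ (S.drop i).take (ℓ i) <+: R.drop (SA k)} (ip i))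
    (i j : ℕ) (hi0 : 0 < i) (hi : i < S.length) (hj0 : 0 < j) (hjlt : j < S.length)
    (hipeq : ip i = ip j)
    (hnhi : ¬ IsInsertHead SA ip i) (hnhj : ¬ IsInsertHead SA ip j) :
    ∃ a m, SA (ip i) = m + 1 ∧ S[i - 1]? = some a ∧ S[j - 1]? = some a ∧ R[m]? = some a := by
 -- key: for any position p with p+1 < |S|, the suffix at SA (ip p) starts with S[p]
  have key : ∀ p, p + 1 < S.length → ∃ a, S[p]? = some a ∧ R[SA (ip p)]? = some a := by
    intro p hp
    have hpS : p < S.length := by omega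
    obtain ⟨a, ha⟩ : ∃ a, S[p]? = some a := ⟨S[p], (List.getElem?_eq_some_iff).2 ⟨hpS, rfl⟩⟩
    have haS : a ∈ S := by
      have := List.getElem?_eq_some_iff.1 ha
      obtain ⟨h1, h2⟩ := this
      exact h2 ▸ List.getElem_mem _
    have hane : a ≠ dollar := by
      intro h
      have := hSdollar p (h ▸ ha)
      omega
    have haR : a ∈ R := hSinR a haS hane
    -- ℓ p > 0
    have hℓpos : 0 < ℓ p := by
      have h1 : (S.drop p).take 1 = [a] := by
        have h0 : (S.drop p)[0]? = some a := by
          rw [List.getElem?_drop]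
          simpa using ha
        rw [← List.head?_eq_getElem?] at h0
        rw [List.take_one, h0]
        rfl
      have hinf : (S.drop p).take 1 <:+: R := by
        rw [h1]
        obtain ⟨s, t, hst⟩ := List.append_of_mem haR
        exact ⟨s, t, by simp [hst]⟩
      have := hUmax p hpS 1 (by omega) hinf
      omega
    -- ip p is in the candidate set (either as greatest or least)
    have hmem : ip p < R.length ∧ (S.drop p).take (ℓ p) <+: R.drop (SA (ip p)) := by
      by_cases hne : {k | k < R.length ∧ (S.drop p).take (ℓ p) <+: R.drop (SA k) ∧
          List.Lex (· < ·) (R.drop (SA k)) ((S.drop p).take (ℓ p) ++ [c p])}.Nonempty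
      · obtain ⟨h1, h2, _⟩ := (hipmax p hpS hℓpos hne).1
        exact ⟨h1, h2⟩
      · exact (hipmin p hpS hℓpos hne).1
    obtain ⟨hiplt, hpre⟩ := hmem
    obtain ⟨t, ht⟩ := hpre
    refine ⟨a, ha, ?_⟩
    have h0 : (R.drop (SA (ip p)))[0]? = some a := by
      rw [← ht]
      have htk : ((S.drop p).take (ℓ p))[0]? = some a := by
        rw [List.getElem?_take_of_lt hℓpos, List.getElem?_drop]
        simpa using ha
      rw [List.getElem?_append_left]
      · exact htk
      · obtain ⟨hlen, -⟩ := List.getElem?_eq_some_iff.1 htk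
        exact hlen
    rw [List.getElem?_drop] at h0
    simpa using h0
  -- unfold the non-insert-head hypotheses
  simp only [IsInsertHead, not_or, not_ne_iff] at hnhi hnhj
  obtain ⟨-, hsi⟩ := hnhi
  obtain ⟨-, hsj⟩ := hnhj
  obtain ⟨a, haS, haR⟩ := key (i - 1) (by omega)
  obtain ⟨b, hbS, hbR⟩ := key (j - 1) (by omega)
  have heqm : SA (ip (i - 1)) = SA (ip (j - 1)) := by
    have h1 := hsi
    rw [hipeq] at h1
    rw [hsj] at h1
    omega
  have hab : a = b := by
    rw [heqm] at haR
    rw [haR] at hbR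
    exact Option.some_injective _ hbR
  exact ⟨a, SA (ip (i - 1)), hsi, haS, hab ▸ hbS, haR⟩
end

section
/- Let R and S be strings as in the context, with insert points ip. If a position i > 1 of S is not an insert-head, then SA_R[ip(i)] ≥ 2 and S[i−1] = R[SA_R[ip(i)] − 1]; that is, the character preceding a non-insert-head suffix of S equals the character that precedes, in R, the suffix of R at its insert point (equivalently, it equals BWT_R[ip(i)], where BWT_R[k] = R[SA_R[k] − 1] when SA_R[k] > 1). -/
/-- if `0 < i < |S|` (i.e. `1 < i ≤ |S|` 1-based) and `i` is not an insert-head, then `SA (ip i) ≥ 1` (0-based; `SA_R[ip(i)] ≥ 2` 1-based) and `S[i-1] = R[SA (ip i) - 1] = BWT_R[ip i]`. -/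
theorem non_insert_head_preceded_by_bwt_char {α : Type*} [LinearOrder α]
    (R S : List α) (hash dollar : α)
    (SA : ℕ → ℕ) (ℓ : ℕ → ℕ) (c : ℕ → α) (ip : ℕ → ℕ)
    -- sentinel/context hypotheses
    (hRne : R ≠ []) (hSne : S ≠ [])
    (hRlast : R[R.length - 1]? = some hash)
    (hRhash : ∀ m, R[m]? = some hash → m = R.length - 1)
    (hSlast : S[S.length - 1]? = some dollar)
    (hSdollar : ∀ m, S[m]? = some dollar → m = S.length - 1)
    (hhd : hash < dollar)
    (hhashmin : ∀ a, (a ∈ R ∨ a ∈ S) → a ≠ hash → hash < a)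
    (hdollarmin : ∀ a, (a ∈ R ∨ a ∈ S) → a ≠ hash → a ≠ dollar → dollar < a)
    (hSinR : ∀ a ∈ S, a ≠ dollar → a ∈ R)
    (hdnotR : dollar ∉ R)
    -- suffix array of R (0-based ranks and positions)
    (hSAran : ∀ k < R.length, SA k < R.length)
    (hSAsurj : ∀ m < R.length, ∃ k < R.length, SA k = m)
    (hSAmono : ∀ k₁ k₂, k₁ < k₂ → k₂ < R.length →
      List.Lex (· < ·) (R.drop (SA k₁)) (R.drop (SA k₂)))
    -- matching statistics: U i = (S.drop i).take (ℓ i) is the longest prefix of the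
    -- suffix S.drop i occurring as a substring of R; c i = S[i + ℓ i] is the mismatch character
    (hUlen : ∀ i < S.length, ℓ i ≤ S.length - i)
    (hUocc : ∀ i < S.length, (S.drop i).take (ℓ i) <:+: R)
    (hUmax : ∀ i < S.length, ∀ m, m ≤ S.length - i → (S.drop i).take m <:+: R → m ≤ ℓ i)
    (hc : ∀ i < S.length, S[i + ℓ i]? = some (c i))
    -- insert point
    (hip0 : ∀ i < S.length, ℓ i = 0 → ip i = 0)
    (hipmax : ∀ i < S.length, 0 < ℓ i →
      {k | k < R.length ∧ (S.drop i).take (ℓ i) <+: R.drop (SA k) ∧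
        List.Lex (· < ·) (R.drop (SA k)) ((S.drop i).take (ℓ i) ++ [c i])}.Nonempty →
      IsGreatest {k | k < R.length ∧ (S.drop i).take (ℓ i) <+: R.drop (SA k) ∧
        List.Lex (· < ·) (R.drop (SA k)) ((S.drop i).take (ℓ i) ++ [c i])} (ip i))
    (hipmin : ∀ i < S.length, 0 < ℓ i →
      ¬ {k | k < R.length ∧ (S.drop i).take (ℓ i) <+: R.drop (SA k) ∧
        List.Lex (· < ·) (R.drop (SA k)) ((S.drop i).take (ℓ i) ++ [c i])}.Nonempty →
      IsLeast {k | k < R.length ∧ (S.drop i).take (ℓ i) <+: R.drop (SA k)} (ip i))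
    (i : ℕ) (hi0 : 0 < i) (hi : i < S.length)
    (hnh : ¬ IsInsertHead SA ip i) :
    1 ≤ SA (ip i) ∧ ∃ a, S[i - 1]? = some a ∧ R[SA (ip i) - 1]? = some a := by
  classical
  have hnh' : i ≠ 0 ∧ SA (ip i) = SA (ip (i - 1)) + 1 := by
    unfold IsInsertHead at hnh; push_neg at hnh; exact hnh
  obtain ⟨-, heq⟩ := hnh'
  set j := i - 1 with hjdef
  have hj : j < S.length := by omega
  -- S[j] exists
  have hjlt : j < S.length := hj
  set a := S.get ⟨j, hj⟩ with ha
  have hSj : S[j]? = some a := by simp [ha, List.getElem?_eq_getElem hj]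
  have hadollar : a ≠ dollar := by
    intro h
    have := hSdollar j (h ▸ hSj)
    omega
  have haS : a ∈ S := by
    have := List.getElem_mem hj
    simpa [ha] using this
  have haR : a ∈ R := hSinR a haS hadollar
  -- [a] is an infix of R
  have hinf : (S.drop j).take 1 <:+: R := by
    have hdrop : S.drop j = a :: S.drop (j + 1) := by
      rw [List.drop_eq_getElem_cons hj]
      simp [ha]
    rw [hdrop]
    simp only [List.take_succ_cons, List.take_zero]
    obtain ⟨s, t, hst⟩ := List.append_of_mem haR
    exact ⟨s, t, by simp [hst]⟩
  have hℓpos : 0 < ℓ j := hUmax j hj 1 (by omega) hinf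
  -- ip j satisfies the prefix condition
  have hmem : ip j < R.length ∧ (S.drop j).take (ℓ j) <+: R.drop (SA (ip j)) := by
    by_cases hne : {k | k < R.length ∧ (S.drop j).take (ℓ j) <+: R.drop (SA k) ∧
        List.Lex (· < ·) (R.drop (SA k)) ((S.drop j).take (ℓ j) ++ [c j])}.Nonempty
    · obtain ⟨h1, h2, -⟩ := (hipmax j hj hℓpos hne).1
      exact ⟨h1, h2⟩
    · exact (hipmin j hj hℓpos hne).1
  obtain ⟨hiplt, hpre⟩ := hmem
  have hSAlt : SA (ip j) < R.length := hSAran _ hiplt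
  -- first char of the prefix is a
  have hL0 : ((S.drop j).take (ℓ j))[0]? = some a := by
    rw [List.getElem?_take]
    simp only [hℓpos, if_pos hℓpos, List.getElem?_drop]
    simpa using hSj
  obtain ⟨t, ht⟩ := hpre
  have hM0 : (R.drop (SA (ip j)))[0]? = some a := by
    have hlen : 0 < ((S.drop j).take (ℓ j)).length := by
      rw [List.length_take, List.length_drop]
      omega
    rw [← ht, List.getElem?_append_left hlen]
    exact hL0
  rw [List.getElem?_drop] at hM0
  refine ⟨by omega, a, ?_, ?_⟩
  · exact hSj
  · rw [heq]
    simpa using hM0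
end

section
/- Let T be a string of length n ending in a unique sentinel, with suffix array SA and LCP array LCP. For all indices 1 ≤ i < j ≤ n, the length of the longest common prefix of the suffixes T[SA[i]..] and T[SA[j]..] equals min{ LCP[k] : i < k ≤ j }. -/
private lemma lex_mid {α : Type*} [LinearOrder α] :
    ∀ (m : ℕ) (a b c : List α), List.Lex (· < ·) a b → List.Lex (· < ·) b c →
      m ≤ a.length → m ≤ c.length → a.take m = c.take m →
      b.take m = a.take m ∧ m ≤ b.length := by
  intro m
  induction m with
  | zero => simp
  | succ m ih =>
    intro a b c hab hbc ha hc htake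
    match a, c with
    | x :: a', z :: c' =>
      simp only [List.take_succ_cons, List.cons.injEq] at htake
      obtain ⟨hxz, htake'⟩ := htake
      match b with
      | [] => cases hab
      | y :: b' =>
        have hxy : x = y ∧ List.Lex (· < ·) a' b' := by
          cases hab with
          | cons h => exact ⟨rfl, h⟩
          | rel h =>
            exfalso
            cases hbc with
            | cons h2 => exact absurd (hxz ▸ h) (lt_irrefl _)
            | rel h2 => exact absurd ((hxz ▸ h).trans h2) (lt_irrefl _)
        have hyz : List.Lex (· < ·) b' c' := by
          cases hbc with
          | cons h2 => exact h2
          | rel h2 => exact absurd (hxy.1 ▸ hxz ▸ h2) (lt_irrefl _)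
        obtain ⟨heq, hlen⟩ := ih a' b' c' hxy.2 hyz
          (by simpa using ha) (by simpa using hc) htake'
        refine ⟨?_, by simpa using hlen⟩
        simp [hxy.1, heq]

/-- Let `T` be a string of length `n` ending in a unique sentinel, with
suffix array `SA` and LCP array `LCP` (0-based ranks).  For all ranks `i < j < n`, the
length of the longest common prefix of the suffixes `T.drop (SA i)` and `T.drop (SA j)`
equals `min { LCP k : i < k ≤ j }`. -/
theorem lcp_of_suffixes_is_range_min {α : Type*} [LinearOrder α]
    (T : List α) (sent : α) (SA LCP : ℕ → ℕ)
    (hTne : T ≠ [])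
    (hlast : T[T.length - 1]? = some sent)
    (huniq : ∀ m, T[m]? = some sent → m = T.length - 1)
    (hmin : ∀ a ∈ T, a ≠ sent → sent < a)
    (hSAran : ∀ k < T.length, SA k < T.length)
    (hSAsurj : ∀ m < T.length, ∃ k < T.length, SA k = m)
    (hSAmono : ∀ k₁ k₂, k₁ < k₂ → k₂ < T.length →
      List.Lex (· < ·) (T.drop (SA k₁)) (T.drop (SA k₂)))
    (hLCP0 : LCP 0 = 0)
    (hLCP : ∀ k, 0 < k → k < T.length →
      IsGreatest {m | m ≤ (T.drop (SA (k - 1))).length ∧ m ≤ (T.drop (SA k)).length ∧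
        (T.drop (SA (k - 1))).take m = (T.drop (SA k)).take m} (LCP k))
    (i j : ℕ) (hij : i < j) (hj : j < T.length) :
    IsGreatest {m | m ≤ (T.drop (SA i)).length ∧ m ≤ (T.drop (SA j)).length ∧
        (T.drop (SA i)).take m = (T.drop (SA j)).take m}
      ((Finset.Icc (i + 1) j).inf' (Finset.nonempty_Icc.mpr (by omega)) LCP) := by
  induction j with
  | zero => omega
  | succ j ihj =>
    rcases Nat.lt_or_ge i j with hij' | hge
    · -- step case : i < j
      have hjT : j < T.length := by omega
      have IH := ihj hij' hjT
      have H2 := hLCP (j + 1) (by omega) hj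
      simp only [Nat.add_sub_cancel] at H2
      have hne : (Finset.Icc (i + 1) j).Nonempty := Finset.nonempty_Icc.mpr (by omega)
      have hins : Finset.Icc (i + 1) (j + 1) = insert (j + 1) (Finset.Icc (i + 1) j) :=
        (Finset.insert_Icc_right_eq_Icc_add_one (by omega)).symm
      have hinf : (Finset.Icc (i + 1) (j + 1)).inf'
          (Finset.nonempty_Icc.mpr (by omega)) LCP
          = LCP (j + 1) ⊓ (Finset.Icc (i + 1) j).inf' hne LCP := by
        rw [Finset.inf'_congr (Finset.nonempty_Icc.mpr (by omega)) hins (fun _ _ => rfl)]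
        exact Finset.inf'_insert hne LCP
      rw [hinf]
      set L1 := (Finset.Icc (i + 1) j).inf' hne LCP with hL1
      set L2 := LCP (j + 1) with hL2
      obtain ⟨⟨h1a, h1b, h1e⟩, h1ub⟩ := IH
      obtain ⟨⟨h2a, h2b, h2e⟩, h2ub⟩ := H2
      constructor
      · refine ⟨by omega, by omega, ?_⟩
        have e1 : (T.drop (SA i)).take (L2 ⊓ L1) = (T.drop (SA j)).take (L2 ⊓ L1) := by
          have := congrArg (List.take (L2 ⊓ L1)) h1e
          simpa [List.take_take, inf_comm, Nat.min_comm, min_assoc,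
            Nat.min_eq_left (min_le_right L2 L1)] using this
        have e2 : (T.drop (SA j)).take (L2 ⊓ L1) = (T.drop (SA (j+1))).take (L2 ⊓ L1) := by
          have := congrArg (List.take (L2 ⊓ L1)) h2e
          simpa [List.take_take, Nat.min_eq_left (min_le_left L2 L1)] using this
        exact e1.trans e2
      · rintro m ⟨hma, hmc, hme⟩
        obtain ⟨hmid, hmb⟩ := lex_mid m (T.drop (SA i)) (T.drop (SA j)) (T.drop (SA (j+1)))
          (hSAmono i j hij' hjT) (hSAmono j (j+1) (by omega) hj) hma hmc hme
        have hle1 : m ≤ L1 := h1ub ⟨hma, hmb, hmid.symm⟩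
        have hle2 : m ≤ L2 := h2ub ⟨hmb, hmc, hmid.trans hme⟩
        exact le_inf hle2 hle1
    · -- base case : j = i, so interval is {i+1}
      have hji : j = i := by omega
      subst hji
      have H := hLCP (j + 1) (by omega) hj
      simp only [Nat.add_sub_cancel] at H
      simpa [Finset.Icc_self] using H
end

section
/- Let T be a string of length n ending in a unique sentinel, with suffix array SA, and let U be any string. Then the set { k ∈ {1,…,n} : U is a prefix of T[SA[k]..] } is an interval of consecutive integers; that is, the suffixes of T having U as a prefix occupy a single contiguous range of positions in the suffix array. -/
private lemma lex_between_prefix {α : Type*} [LinearOrder α] :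
    ∀ (U x y z : List α), U <+: x → U <+: z →
      List.Lex (· < ·) x y → List.Lex (· < ·) y z → U <+: y := by
  intro U
  induction U with
  | nil => intro _ _ _ _ _ _ _; exact List.nil_prefix
  | cons a U ih =>
    intro x y z hx hz hxy hyz
    obtain ⟨x', rfl⟩ := hx
    obtain ⟨z', rfl⟩ := hz
    cases hxy with
    | rel h1 =>
      rename_i b y'
      cases hyz with
      | rel h2 => exact absurd (h1.trans h2) (lt_irrefl a)
      | cons h2 => exact absurd h1 (lt_irrefl a)
    | cons h1 =>
      rename_i y'
      cases hyz with
      | rel h2 => exact absurd h2 (lt_irrefl a)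
      | cons h2 =>
        obtain ⟨t, ht⟩ := ih _ _ _ ⟨x', rfl⟩ ⟨z', rfl⟩ h1 h2
        exact ⟨t, by rw [List.cons_append, ht]⟩

/-- Let `T` be a string of length `n` ending in a unique sentinel, with
suffix array `SA` (0-based ranks), and let `U` be any string.  Then the set of ranks `k`
such that `U` is a prefix of the suffix `T.drop (SA k)` is an interval of consecutive
integers: the suffixes of `T` having `U` as a prefix occupy a single contiguous range of
positions in the suffix array. -/
theorem prefix_interval_in_suffix_array {α : Type*} [LinearOrder α]
    (T : List α) (sent : α) (SA : ℕ → ℕ)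
    (hTne : T ≠ [])
    (hlast : T[T.length - 1]? = some sent)
    (huniq : ∀ m, T[m]? = some sent → m = T.length - 1)
    (hmin : ∀ a ∈ T, a ≠ sent → sent < a)
    (hSAran : ∀ k < T.length, SA k < T.length)
    (hSAsurj : ∀ m < T.length, ∃ k < T.length, SA k = m)
    (hSAmono : ∀ k₁ k₂, k₁ < k₂ → k₂ < T.length →
      List.Lex (· < ·) (T.drop (SA k₁)) (T.drop (SA k₂)))
    (U : List α) :
    ∃ a b : ℕ, {k | k < T.length ∧ U <+: T.drop (SA k)} = Set.Ico a b := by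
  set S : Set ℕ := {k | k < T.length ∧ U <+: T.drop (SA k)} with hS
  -- convexity
  have hconv : ∀ k₁ k₂ k, k₁ ∈ S → k₂ ∈ S → k₁ ≤ k → k ≤ k₂ → k ∈ S := by
    intro k₁ k₂ k h1 h2 hk1 hk2
    rcases eq_or_lt_of_le hk1 with rfl | hk1'
    · exact h1
    rcases eq_or_lt_of_le hk2 with rfl | hk2'
    · exact h2
    have hklen : k < T.length := lt_trans hk2' h2.1
    refine ⟨hklen, ?_⟩
    exact lex_between_prefix U _ _ _ h1.2 h2.2
      (hSAmono k₁ k hk1' hklen) (hSAmono k k₂ hk2' h2.1)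
  by_cases hne : S.Nonempty
  · have hbdd : BddAbove S := ⟨T.length, fun k hk => le_of_lt hk.1⟩
    refine ⟨sInf S, sSup S + 1, ?_⟩
    have hInf : sInf S ∈ S := Nat.sInf_mem hne
    have hSup : sSup S ∈ S := Nat.sSup_mem hne hbdd
    ext k
    simp only [Set.mem_Ico]
    constructor
    · intro hk
      exact ⟨Nat.sInf_le hk, Nat.lt_succ_of_le (le_csSup hbdd hk)⟩
    · intro ⟨h1, h2⟩
      exact hconv _ _ k hInf hSup h1 (Nat.lt_succ_iff.mp h2)
  · refine ⟨0, 0, ?_⟩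
    simp only [Set.Ico_self]
    exact Set.not_nonempty_iff_eq_empty.mp hne
end
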